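/- arXiv:2009.13455 — 9 statements merged into one kernel-verified Lean document; each statement's English description precedes it below -/
import Mathlib

section
/- Let μ₁, μ₂ > 0 with μ₁ ≠ μ₂, and let r₁, r₂ > 0 with r₁ + r₂ fixed. If κ > 0 and μ₁ sin(√κ r₁) = μ₂ sin(√κ r₂) and also μ₁ r₁ = μ₂ r₂ with r₁ + r₂ < π/√κ, then a contradiction follows; i.e., for distinct masses the relativistic lever rule and the proportional rule μ₁r₁ = μ₂r₂ cannot both hold for positive r₁, r₂ with √κ(r₁+r₂) < π. -/
/-!
Put `xᵢ = √κ rᵢ ∈ (0, π)`. Eliminating the masses from the two rules gives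
`sin x₁ / x₁ = sin x₂ / x₂`. Since `sin` is strictly concave on `[0, π]` and vanishes at `0`,
its secant slope `sin x / x` from the origin is strictly decreasing there, so `x₁ = x₂`; the
proportional rule then forces `μ₁ = μ₂`.
-/

open Real Set

theorem Real.strictAntiOn_sin_div_self : StrictAntiOn (fun x => sin x / x) (Ioc 0 π) := by
  intro x hx y hy hxy
  have hzero : (0 : ℝ) ∈ Icc 0 π := ⟨le_rfl, pi_pos.le⟩
  simpa using strictConcaveOn_sin_Icc.secant_strict_mono hzero (Ioc_subset_Icc_self hx)
    (Ioc_subset_Icc_self hy) hx.1.ne' hy.1.ne' hxy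

theorem lever_vs_collision_sphere_general (μ₁ μ₂ r₁ r₂ κ : ℝ)
    (hμ₁ : 0 < μ₁) (hμ : μ₁ ≠ μ₂)
    (hr₁ : 0 < r₁) (hr₂ : 0 < r₂) (hκ : 0 < κ)
    (hC1 : μ₁ * Real.sin (Real.sqrt κ * r₁) = μ₂ * Real.sin (Real.sqrt κ * r₂))
    (hC2 : μ₁ * r₁ = μ₂ * r₂)
    (hr : r₁ + r₂ < π / Real.sqrt κ) : False := by
  have hs : 0 < √κ := sqrt_pos.2 hκ
  have hsum : √κ * r₁ + √κ * r₂ < π := by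
    rw [← mul_add]; exact (lt_div_iff₀' hs).1 hr
  have hx₁ : √κ * r₁ ∈ Ioc 0 π := ⟨by positivity, by nlinarith [mul_pos hs hr₂]⟩
  have hx₂ : √κ * r₂ ∈ Ioc 0 π := ⟨by positivity, by nlinarith [mul_pos hs hr₁]⟩
  have hcross : sin (√κ * r₁) * (√κ * r₂) = sin (√κ * r₂) * (√κ * r₁) := by
    refine mul_left_cancel₀ hμ₁.ne' ?_
    linear_combination (√κ * r₂) * hC1 - √κ * sin (√κ * r₂) * hC2
  have hslope : sin (√κ * r₁) / (√κ * r₁) = sin (√κ * r₂) / (√κ * r₂) :=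
    (div_eq_div_iff hx₁.1.ne' hx₂.1.ne').2 hcross
  have hr_eq : r₁ = r₂ :=
    mul_left_cancel₀ hs.ne' (strictAntiOn_sin_div_self.injOn hx₁ hx₂ hslope)
  subst hr_eq
  exact hμ (mul_right_cancel₀ hr₁.ne' hC2)

/-- For distinct masses on a sphere of curvature `κ > 0`, the relativistic
lever rule and the proportional rule `μ₁ r₁ = μ₂ r₂` are incompatible. -/
theorem lever_vs_collision_sphere (μ₁ μ₂ r₁ r₂ κ : ℝ)
    (hμ₁ : 0 < μ₁) (hμ₂ : 0 < μ₂) (hμ : μ₁ ≠ μ₂)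
    (hr₁ : 0 < r₁) (hr₂ : 0 < r₂) (hκ : 0 < κ)
    (hC1 : μ₁ * Real.sin (Real.sqrt κ * r₁) = μ₂ * Real.sin (Real.sqrt κ * r₂))
    (hC2 : μ₁ * r₁ = μ₂ * r₂)
    (hr : r₁ + r₂ < π / Real.sqrt κ) : False :=
  lever_vs_collision_sphere_general μ₁ μ₂ r₁ r₂ κ hμ₁ hμ hr₁ hr₂ hκ hC1 hC2 hr
end

section
/- Let μ₁, μ₂ > 0 with μ₁ ≠ μ₂, and r₁, r₂ > 0. If μ₁ sinh r₁ = μ₂ sinh r₂ and μ₁ r₁ = μ₂ r₂, then a contradiction follows. Hence on hyperbolic space (κ = -1) the relativistic lever rule (C1) and the collision-point rule (C2) determine different points for distinct masses. -/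
/-!
Writing `μ sinh r = (μ r) · (sinh r / r)`, the collision rule turns the lever rule into
`sinh r₁ / r₁ = sinh r₂ / r₂` unless both masses vanish. Since `sinh` is strictly convex on
`[0, ∞)` and vanishes at `0`, the secant slope `sinh r / r` is strictly increasing, so `r₁ = r₂`
and then `μ₁ = μ₂`.
-/

open Real Set

lemma strictConvexOn_sinh : StrictConvexOn ℝ (Ici 0) sinh := by
  refine StrictMonoOn.strictConvexOn_of_deriv (convex_Ici 0) continuous_sinh.continuousOn ?_
  rw [interior_Ici, Real.deriv_sinh]
  exact cosh_strictMonoOn.mono Ioi_subset_Ici_self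

lemma strictMonoOn_sinh_div_self : StrictMonoOn (fun x => sinh x / x) (Ioi 0) := by
  intro x hx y hy hxy
  simpa using strictConvexOn_sinh.secant_strict_mono self_mem_Ici (mem_Ici.2 hx.le)
    (mem_Ici.2 hy.le) hx.ne' hy.ne' hxy

lemma eq_of_mul_sinh_eq_of_mul_eq {μ₁ μ₂ r₁ r₂ : ℝ} (hr₁ : 0 < r₁) (hr₂ : 0 < r₂)
    (hC1 : μ₁ * sinh r₁ = μ₂ * sinh r₂) (hC2 : μ₁ * r₁ = μ₂ * r₂) : μ₁ = μ₂ := by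
  have hsinh (μ r : ℝ) (hr : 0 < r) : μ * sinh r = μ * r * (sinh r / r) := by
    field_simp
  rw [hsinh μ₁ r₁ hr₁, hsinh μ₂ r₂ hr₂, hC2] at hC1
  rcases mul_eq_mul_left_iff.mp hC1 with hslope | hm
  · have hr : r₁ = r₂ := strictMonoOn_sinh_div_self.injOn hr₁ hr₂ hslope
    subst hr
    exact mul_right_cancel₀ hr₁.ne' hC2
  · have h₁ : μ₁ = 0 := (mul_eq_zero_iff_right hr₁.ne').mp (hC2.trans hm)
    have h₂ : μ₂ = 0 := (mul_eq_zero_iff_right hr₂.ne').mp hm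
    rw [h₁, h₂]

theorem lever_vs_collision_hyperbolic_general (μ₁ μ₂ r₁ r₂ : ℝ)
    (hμ : μ₁ ≠ μ₂)
    (hr₁ : 0 < r₁) (hr₂ : 0 < r₂)
    (hC1 : μ₁ * Real.sinh r₁ = μ₂ * Real.sinh r₂)
    (hC2 : μ₁ * r₁ = μ₂ * r₂) : False :=
  hμ (eq_of_mul_sinh_eq_of_mul_eq hr₁ hr₂ hC1 hC2)

/-- On hyperbolic space (κ = -1), the lever rule `μ₁ sinh r₁ = μ₂ sinh r₂`
and the collision rule `μ₁ r₁ = μ₂ r₂` are incompatible for distinct masses. -/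
theorem lever_vs_collision_hyperbolic (μ₁ μ₂ r₁ r₂ : ℝ)
    (hμ₁ : 0 < μ₁) (hμ₂ : 0 < μ₂) (hμ : μ₁ ≠ μ₂)
    (hr₁ : 0 < r₁) (hr₂ : 0 < r₂)
    (hC1 : μ₁ * Real.sinh r₁ = μ₂ * Real.sinh r₂)
    (hC2 : μ₁ * r₁ = μ₂ * r₂) : False :=
  lever_vs_collision_hyperbolic_general μ₁ μ₂ r₁ r₂ hμ hr₁ hr₂ hC1 hC2
end

section
/- Let μ₁, μ₂ > 0 with μ₁ ≠ μ₂, and r₁, r₂ > 0. If μ₁ sinh(2r₁) = μ₂ sinh(2r₂) and μ₁ sinh r₁ = μ₂ sinh r₂, then a contradiction follows. Hence on hyperbolic space the steady-rotation rule (C3) and the lever rule (C1) determine different points for distinct masses. -/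
open Real

/-! Since `sinh (2r) = 2 sinh r cosh r`, dividing rule C3 by rule C1 gives `cosh r₁ = cosh r₂`,
so `r₁ = r₂`, and then rule C1 forces `μ₁ = μ₂`. -/

theorem Real.cosh_eq_of_mul_sinh_eq_of_mul_sinh_two_mul_eq {a b x y : ℝ}
    (hsinh : a * sinh x = b * sinh y) (hsinh_two : a * sinh (2 * x) = b * sinh (2 * y))
    (hne : a * sinh x ≠ 0) : cosh x = cosh y := by
  refine mul_left_cancel₀ hne ?_
  calc a * sinh x * cosh x = a * sinh (2 * x) / 2 := by rw [sinh_two_mul]; ring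
    _ = b * sinh (2 * y) / 2 := by rw [hsinh_two]
    _ = a * sinh x * cosh y := by rw [sinh_two_mul, hsinh]; ring

theorem rotation_vs_lever_hyperbolic_general (μ₁ μ₂ r₁ r₂ : ℝ)
    (hμ₂ : 0 < μ₂) (hμ : μ₁ ≠ μ₂)
    (hr₁ : 0 < r₁) (hr₂ : 0 < r₂)
    (hC3 : μ₁ * Real.sinh (2 * r₁) = μ₂ * Real.sinh (2 * r₂))
    (hC1 : μ₁ * Real.sinh r₁ = μ₂ * Real.sinh r₂) : False := by
  have hsinh₂ : 0 < sinh r₂ := sinh_pos_iff.mpr hr₂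
  have hlever_ne : μ₁ * sinh r₁ ≠ 0 := by rw [hC1]; positivity
  have hr : r₁ = r₂ := cosh_injOn hr₁.le hr₂.le
    (cosh_eq_of_mul_sinh_eq_of_mul_sinh_two_mul_eq hC1 hC3 hlever_ne)
  rw [hr] at hC1
  exact hμ (mul_right_cancel₀ hsinh₂.ne' hC1)

/-- On hyperbolic space, the steady-rotation rule `μ₁ sinh (2r₁) = μ₂ sinh (2r₂)`
and the lever rule `μ₁ sinh r₁ = μ₂ sinh r₂` are incompatible for distinct masses. -/
theorem rotation_vs_lever_hyperbolic (μ₁ μ₂ r₁ r₂ : ℝ)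
    (hμ₁ : 0 < μ₁) (hμ₂ : 0 < μ₂) (hμ : μ₁ ≠ μ₂)
    (hr₁ : 0 < r₁) (hr₂ : 0 < r₂)
    (hC3 : μ₁ * Real.sinh (2 * r₁) = μ₂ * Real.sinh (2 * r₂))
    (hC1 : μ₁ * Real.sinh r₁ = μ₂ * Real.sinh r₂) : False :=
  rotation_vs_lever_hyperbolic_general μ₁ μ₂ r₁ r₂ hμ₂ hμ hr₁ hr₂ hC3 hC1
end

section
/- For fixed μ₁, μ₂ > 0 and fixed r with 0 < r < π, there exists a unique pair (r₁, r₂) with r₁, r₂ > 0, r₁ + r₂ = r, and μ₁ sin r₁ = μ₂ sin r₂. -/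
/-!
The difference `μ₁ sin x - μ₂ sin (r - x)` is `-μ₂ sin r < 0` at `x = 0` and `μ₁ sin r > 0`
at `x = r`, so it vanishes somewhere in `(0, r)`.
For two roots `x, y`, cross-multiplying gives `sin (r - x) sin y = sin (r - y) sin x`, i.e.
`sin r · sin (y - x) = 0`; as `sin r ≠ 0` and `|y - x| < π`, this forces `x = y`.
-/

open Real Set

theorem sin_sub_mul_sin_sub_sin_sub_mul_sin (r x y : ℝ) :
    sin (r - x) * sin y - sin (r - y) * sin x = sin r * sin (y - x) := by
  simp only [sin_sub]
  ring

theorem exists_mem_Ioo_mul_sin_eq_mul_sin_sub {μ₁ μ₂ r : ℝ} (hμ₁ : 0 < μ₁) (hμ₂ : 0 < μ₂)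
    (hr : 0 < r) (hrπ : r < π) : ∃ x ∈ Ioo 0 r, μ₁ * sin x = μ₂ * sin (r - x) := by
  have hsin : 0 < sin r := sin_pos_of_pos_of_lt_pi hr hrπ
  let f : ℝ → ℝ := fun x ↦ μ₁ * sin x - μ₂ * sin (r - x)
  have hf : ContinuousOn f (Icc 0 r) := by fun_prop
  have hzero : (0 : ℝ) ∈ Ioo (f 0) (f r) := by
    simp only [f, sin_zero, sub_zero, sub_self, mul_zero, zero_sub, mem_Ioo, Left.neg_neg_iff]
    exact ⟨by positivity, by positivity⟩
  obtain ⟨x, hx, hfx⟩ := intermediate_value_Ioo hr.le hf hzero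
  exact ⟨x, hx, sub_eq_zero.1 hfx⟩

theorem eq_of_mul_sin_eq_mul_sin_sub {μ₁ μ₂ r x y : ℝ} (hμ₂ : μ₂ ≠ 0) (hr : 0 < r)
    (hrπ : r < π) (hx : x ∈ Icc 0 r) (hy : y ∈ Icc 0 r)
    (hx_eq : μ₁ * sin x = μ₂ * sin (r - x)) (hy_eq : μ₁ * sin y = μ₂ * sin (r - y)) :
    x = y := by
  have hcross : μ₂ * (sin r * sin (y - x)) = 0 := by
    rw [← sin_sub_mul_sin_sub_sin_sub_mul_sin]
    linear_combination sin x * hy_eq - sin y * hx_eq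
  have hsin : sin (y - x) = 0 := by
    simpa [hμ₂, (sin_pos_of_pos_of_lt_pi hr hrπ).ne'] using hcross
  have := (sin_eq_zero_iff_of_lt_of_lt (by linarith [hx.2, hy.1]) (by linarith [hx.1, hy.2])).1 hsin
  linarith

/-- Existence and uniqueness of the spherical lever-rule centre of mass
for non-antipodal configurations. -/
theorem lever_spherical_exists_unique (μ₁ μ₂ r : ℝ)
    (hμ₁ : 0 < μ₁) (hμ₂ : 0 < μ₂) (hr : 0 < r) (hrπ : r < π) :
    ∃! p : ℝ × ℝ, 0 < p.1 ∧ 0 < p.2 ∧ p.1 + p.2 = r ∧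
      μ₁ * Real.sin p.1 = μ₂ * Real.sin p.2 := by
  obtain ⟨c, hc, hc_eq⟩ := exists_mem_Ioo_mul_sin_eq_mul_sin_sub hμ₁ hμ₂ hr hrπ
  refine ⟨(c, r - c), ⟨hc.1, sub_pos.2 hc.2, add_sub_cancel _ _, hc_eq⟩, ?_⟩
  rintro ⟨a, b⟩ ⟨ha, hb, rfl, hab⟩
  rw [← add_sub_cancel_left a b] at hab
  have hac : a = c := eq_of_mul_sin_eq_mul_sin_sub hμ₂.ne' hr hrπ
    ⟨ha.le, by linarith⟩ (Ioo_subset_Icc_self hc) hab hc_eq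
  subst hac
  simp
end

section
/- Let μ₁, μ₂ > 0 with μ₁ ≠ μ₂ and let 0 < r < π/2. Then there exists exactly one pair (r₁, r₂) with r₁, r₂ > 0, r₁ + r₂ = r, and μ₁ sin(2r₁) = μ₂ sin(2r₂). -/
/-!
Put `s = 2r ∈ (0, π)` and look for the angle `a = 2r₁ ∈ (0, s)` with `μ₁ sin a = μ₂ sin (s - a)`.
The difference `μ₁ sin a - μ₂ sin (s - a)` goes from `-μ₂ sin s < 0` to `μ₁ sin s > 0`, so a root
exists. For two roots `a, b` the identity `sin a sin (s - b) - sin b sin (s - a) = sin s sin (a - b)`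
gives `μ₁ sin s sin (a - b) = 0`, and `|a - b| < π` forces `a = b`.
-/

open Real Set

theorem sin_mul_sin_sub_sub_sin_mul_sin_sub (s a b : ℝ) :
    sin a * sin (s - b) - sin b * sin (s - a) = sin s * sin (a - b) := by
  simp only [sin_sub]
  ring

theorem exists_mul_sin_eq_mul_sin_sub {μ₁ μ₂ s : ℝ} (hμ₁ : 0 < μ₁) (hμ₂ : 0 < μ₂)
    (hs₀ : 0 < s) (hsπ : s < π) :
    ∃ a ∈ Ioo 0 s, μ₁ * sin a = μ₂ * sin (s - a) := by
  have hsin : 0 < sin s := sin_pos_of_pos_of_lt_pi hs₀ hsπ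
  have hcont : ContinuousOn (fun a => μ₁ * sin a - μ₂ * sin (s - a)) (Icc 0 s) := by
    fun_prop
  have hzero : (0 : ℝ) ∈ Ioo (μ₁ * sin 0 - μ₂ * sin (s - 0)) (μ₁ * sin s - μ₂ * sin (s - s)) := by
    simp only [sin_zero, sub_zero, sub_self, mul_zero, zero_sub, mem_Ioo]
    constructor <;> nlinarith
  obtain ⟨a, ha, hroot⟩ := intermediate_value_Ioo hs₀.le hcont hzero
  exact ⟨a, ha, sub_eq_zero.mp hroot⟩

theorem eq_of_mul_sin_eq_mul_sin_sub_s9 {μ₁ μ₂ s a b : ℝ} (hμ₁ : μ₁ ≠ 0) (hs : sin s ≠ 0)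
    (ha : a ∈ Ioo 0 π) (hb : b ∈ Ioo 0 π)
    (hsa : μ₁ * sin a = μ₂ * sin (s - a)) (hsb : μ₁ * sin b = μ₂ * sin (s - b)) :
    a = b := by
  have hprod : μ₁ * (sin s * sin (a - b)) = 0 := by
    rw [← sin_mul_sin_sub_sub_sin_mul_sin_sub, mul_sub, ← mul_assoc, ← mul_assoc, hsa, hsb]
    ring
  have hsin : sin (a - b) = 0 := by simpa [hμ₁, hs] using hprod
  have hdiff : a - b = 0 :=
    (sin_eq_zero_iff_of_lt_of_lt (by linarith [ha.1, hb.2]) (by linarith [ha.2, hb.1])).mp hsin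
  linarith

theorem rotation_sphere_acute_exists_unique_general (μ₁ μ₂ r : ℝ)
    (hμ₁ : 0 < μ₁) (hμ₂ : 0 < μ₂)
    (hr : 0 < r) (hrπ : r < π / 2) :
    ∃! p : ℝ × ℝ, 0 < p.1 ∧ 0 < p.2 ∧ p.1 + p.2 = r ∧
      μ₁ * Real.sin (2 * p.1) = μ₂ * Real.sin (2 * p.2) := by
  have h2r : 2 * r < π := by linarith
  obtain ⟨a, ⟨ha₀, ha⟩, hroot⟩ := exists_mul_sin_eq_mul_sin_sub hμ₁ hμ₂ (by linarith) h2r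
  refine ⟨(a / 2, r - a / 2), ⟨by linarith, by linarith, by ring, ?_⟩, ?_⟩
  · simpa [mul_sub, mul_div_cancel₀] using hroot
  rintro ⟨x, y⟩ ⟨hx, hy, hxy, hxroot⟩
  obtain rfl : y = r - x := by linarith
  rw [mul_sub] at hxroot
  have h2x : 2 * x = a :=
    eq_of_mul_sin_eq_mul_sin_sub_s9 hμ₁.ne' (sin_pos_of_pos_of_lt_pi (by linarith) h2r).ne'
      ⟨by linarith, by linarith⟩ ⟨ha₀, by linarith⟩ hxroot hroot
  ext <;> simp only <;> linarith

/-- Existence and uniqueness of the steady-rotation centre on the unit sphere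
when the masses subtend an acute arc (`0 < r < π/2`). -/
theorem rotation_sphere_acute_exists_unique (μ₁ μ₂ r : ℝ)
    (hμ₁ : 0 < μ₁) (hμ₂ : 0 < μ₂) (hμ : μ₁ ≠ μ₂)
    (hr : 0 < r) (hrπ : r < π / 2) :
    ∃! p : ℝ × ℝ, 0 < p.1 ∧ 0 < p.2 ∧ p.1 + p.2 = r ∧
      μ₁ * Real.sin (2 * p.1) = μ₂ * Real.sin (2 * p.2) :=
  rotation_sphere_acute_exists_unique_general μ₁ μ₂ r hμ₁ hμ₂ hr hrπ
end

section
/- Let μ₁, μ₂ > 0 and suppose r₁, r₂ > 0 satisfy both μ₁ sin r₁ = μ₂ sin r₂ and μ₁ sin(2r₁) = μ₂ sin(2r₂), with r₁ + r₂ < π/2. Then μ₁ = μ₂ and r₁ = r₂. -/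
/-! Since `sin (2r) = 2 sin r cos r`, dividing the steady-rotation rule by the lever rule leaves
`cos r₁ = cos r₂`; cosine is injective on `[0, π]`, so `r₁ = r₂`, and then the lever rule
forces `μ₁ = μ₂`. -/

open Real

theorem cos_eq_cos_of_mul_sin_eq_of_mul_sin_two_mul_eq {a b x y : ℝ}
    (h₁ : a * sin x = b * sin y) (h₂ : a * sin (2 * x) = b * sin (2 * y))
    (hy : b * sin y ≠ 0) : cos x = cos y := by
  have h : (a * sin x) * cos x = (b * sin y) * cos y := by
    rw [sin_two_mul, sin_two_mul] at h₂
    linear_combination h₂ / 2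
  rw [h₁] at h
  exact mul_left_cancel₀ hy h

theorem lever_eq_rotation_sphere_only_equal_masses_general (μ₁ μ₂ r₁ r₂ : ℝ)
    (hμ₂ : 0 < μ₂)
    (hr₁ : 0 < r₁) (hr₂ : 0 < r₂)
    (hC1 : μ₁ * Real.sin r₁ = μ₂ * Real.sin r₂)
    (hC3 : μ₁ * Real.sin (2 * r₁) = μ₂ * Real.sin (2 * r₂))
    (hr : r₁ + r₂ < π / 2) :
    μ₁ = μ₂ ∧ r₁ = r₂ := by
  have hsin₂ : 0 < sin r₂ := sin_pos_of_pos_of_lt_pi hr₂ (by linarith [pi_pos])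
  have hcos := cos_eq_cos_of_mul_sin_eq_of_mul_sin_two_mul_eq hC1 hC3 (by positivity)
  have hr_eq : r₁ = r₂ :=
    injOn_cos ⟨hr₁.le, by linarith [pi_pos]⟩ ⟨hr₂.le, by linarith [pi_pos]⟩ hcos
  rw [hr_eq] at hC1
  exact ⟨mul_right_cancel₀ hsin₂.ne' hC1, hr_eq⟩

/-- On the unit sphere with an acute arc, the lever rule (C1) and the
steady-rotation rule (C3) agree only for equal masses. -/
theorem lever_eq_rotation_sphere_only_equal_masses (μ₁ μ₂ r₁ r₂ : ℝ)
    (hμ₁ : 0 < μ₁) (hμ₂ : 0 < μ₂)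
    (hr₁ : 0 < r₁) (hr₂ : 0 < r₂)
    (hC1 : μ₁ * Real.sin r₁ = μ₂ * Real.sin r₂)
    (hC3 : μ₁ * Real.sin (2 * r₁) = μ₂ * Real.sin (2 * r₂))
    (hr : r₁ + r₂ < π / 2) :
    μ₁ = μ₂ ∧ r₁ = r₂ :=
  lever_eq_rotation_sphere_only_equal_masses_general μ₁ μ₂ r₁ r₂ hμ₂ hr₁ hr₂ hC1 hC3 hr
end

section
/- Let α₁, α₂ ∈ (0, ∞), ω ≠ 0, μ₁, μ₂ > 0, K = diag(1,1,-1). Define q₁(t) = R(ωt)·(0, -sinh α₁, cosh α₁)ᵀ and q₂(t) = R(ωt)·(0, sinh α₂, cosh α₂)ᵀ, where R(θ) is Euclidean rotation by angle θ about the z-axis. Then J(t) = μ₁ (K q₁(t)) × (K q̇₁(t)) + μ₂ (K q₂(t)) × (K q̇₂(t)) equals (-ω/2)·(-(μ₁ sinh 2α₁ - μ₂ sinh 2α₂) sin ωt, (μ₁ sinh 2α₁ - μ₂ sinh 2α₂) cos ωt, -2(μ₁ sinh²α₁ + μ₂ sinh²α₂)), and J(t) is constant in t if and only if μ₁ sinh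 2α₁ = μ₂ sinh 2α₂. -/
open Real Matrix

/-! Each body moves by `q̇ = ω e₃ × q`, and for such a velocity the Lorentz momentum
`(K q) × (K q̇)` is `ω (q₃ q₁, q₃ q₂, q₁² + q₂²)`. On the orbits `q = R(ωt)(0, ∓sinh α, cosh α)`
this is `ω (± ½ sinh 2α sin ωt, ∓ ½ sinh 2α cos ωt, sinh² α)`: the third components of the two
bodies add up, while the horizontal parts rotate with the configuration and cancel exactly when
`μ₁ sinh 2α₁ = μ₂ sinh 2α₂`. -/

noncomputable def rotZ (θ : ℝ) : Matrix (Fin 3) (Fin 3) ℝ :=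
  !![cos θ, -sin θ, 0; sin θ, cos θ, 0; 0, 0, 1]

lemma rotZ_mulVec (θ : ℝ) (v : Fin 3 → ℝ) :
    rotZ θ *ᵥ v = ![cos θ * v 0 - sin θ * v 1, sin θ * v 0 + cos θ * v 1, v 2] := by
  ext i
  fin_cases i <;> simp [rotZ, mulVec, dotProduct, Fin.sum_univ_three, sub_eq_add_neg]

lemma rotZ_mulVec_eq_cos_smul_add_sin_smul (θ : ℝ) (v : Fin 3 → ℝ) :
    rotZ θ *ᵥ v = cos θ • ![v 0, v 1, 0] + sin θ • ![-v 1, v 0, 0] + ![0, 0, v 2] := by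
  ext i
  fin_cases i <;> simp [rotZ_mulVec, sub_eq_add_neg, add_comm]

lemma hasDerivAt_rotZ_mulVec (ω t : ℝ) (v : Fin 3 → ℝ) :
    HasDerivAt (fun t => rotZ (ω * t) *ᵥ v) (ω • (![0, 0, 1] ⨯₃ (rotZ (ω * t) *ᵥ v))) t := by
  have hθ : HasDerivAt (fun t => ω * t) ω t := by simpa using (hasDerivAt_id t).const_mul ω
  simp only [rotZ_mulVec_eq_cos_smul_add_sin_smul]
  refine (((hθ.cos.smul_const ![v 0, v 1, 0]).add (hθ.sin.smul_const ![-v 1, v 0, 0])).add_const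
    ![0, 0, v 2]).congr_deriv ?_
  ext i
  fin_cases i <;> simp [cross_apply] <;> ring

lemma lorentz_cross_of_rotation_about_e₃ (q : Fin 3 → ℝ) :
    (diagonal ![1, 1, -1] *ᵥ q) ⨯₃ (diagonal ![1, 1, -1] *ᵥ (![0, 0, 1] ⨯₃ q)) =
      ![q 2 * q 0, q 2 * q 1, q 0 ^ 2 + q 1 ^ 2] := by
  ext i
  fin_cases i <;> simp [cross_apply, mulVec_diagonal, sq]

lemma rotating_vector_const_iff {ω : ℝ} (hω : ω ≠ 0) (D c : ℝ) :
    (∀ t s : ℝ, ![-D * sin (ω * t), D * cos (ω * t), c] = ![-D * sin (ω * s), D * cos (ω * s), c])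
      ↔ D = 0 := by
  refine ⟨fun h => ?_, fun hD t s => by simp [hD]⟩
  have h0 := congrFun (h (π / 2 / ω) 0) 0
  have hquarter : ω * (π / 2 / ω) = π / 2 := by field_simp
  simpa [hquarter] using h0

theorem momentum_rotating_hyperboloid_general (μ₁ μ₂ α₁ α₂ ω : ℝ)
    (hω : ω ≠ 0) :
    let K : Matrix (Fin 3) (Fin 3) ℝ := Matrix.diagonal ![1, 1, -1]
    let R : ℝ → Matrix (Fin 3) (Fin 3) ℝ := fun θ =>
      !![Real.cos θ, -Real.sin θ, 0; Real.sin θ, Real.cos θ, 0; 0, 0, 1]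
    let q₁ : ℝ → Fin 3 → ℝ := fun t => (R (ω * t)).mulVec ![0, -Real.sinh α₁, Real.cosh α₁]
    let q₂ : ℝ → Fin 3 → ℝ := fun t => (R (ω * t)).mulVec ![0, Real.sinh α₂, Real.cosh α₂]
    let J : ℝ → Fin 3 → ℝ := fun t =>
      μ₁ • ((K.mulVec (q₁ t)) ⨯₃ (K.mulVec (deriv q₁ t))) +
      μ₂ • ((K.mulVec (q₂ t)) ⨯₃ (K.mulVec (deriv q₂ t)))
    (∀ t : ℝ, J t = (-ω / 2) •
      ![-(μ₁ * Real.sinh (2 * α₁) - μ₂ * Real.sinh (2 * α₂)) * Real.sin (ω * t),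
        (μ₁ * Real.sinh (2 * α₁) - μ₂ * Real.sinh (2 * α₂)) * Real.cos (ω * t),
        -2 * (μ₁ * Real.sinh α₁ ^ 2 + μ₂ * Real.sinh α₂ ^ 2)]) ∧
    ((∀ t s : ℝ, J t = J s) ↔
      μ₁ * Real.sinh (2 * α₁) = μ₂ * Real.sinh (2 * α₂)) := by
  intro K R q₁ q₂ J
  have hJ : ∀ t, J t = (-ω / 2) •
      ![-(μ₁ * sinh (2 * α₁) - μ₂ * sinh (2 * α₂)) * sin (ω * t),
        (μ₁ * sinh (2 * α₁) - μ₂ * sinh (2 * α₂)) * cos (ω * t),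
        -2 * (μ₁ * sinh α₁ ^ 2 + μ₂ * sinh α₂ ^ 2)] := by
    intro t
    have hpyth := sin_sq_add_cos_sq (ω * t)
    simp only [J, q₁, q₂, K, show R = rotZ from rfl, (hasDerivAt_rotZ_mulVec _ _ _).deriv,
      mulVec_smul, map_smul, lorentz_cross_of_rotation_about_e₃]
    ext i
    fin_cases i
    · simp [rotZ_mulVec, sinh_two_mul]; ring
    · simp [rotZ_mulVec, sinh_two_mul]; ring
    · simp [rotZ_mulVec]; linear_combination (ω * (μ₁ * sinh α₁ ^ 2 + μ₂ * sinh α₂ ^ 2)) * hpyth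
  refine ⟨hJ, ?_⟩
  simp only [hJ, smul_right_inj (div_ne_zero (neg_ne_zero.mpr hω) two_ne_zero)]
  rw [rotating_vector_const_iff hω, sub_eq_zero]

/-- Momentum of a uniformly rotating two-body configuration on the hyperboloid
(curvature -1), and its conservation criterion. -/
theorem momentum_rotating_hyperboloid (μ₁ μ₂ α₁ α₂ ω : ℝ)
    (hμ₁ : 0 < μ₁) (hμ₂ : 0 < μ₂)
    (hα₁ : 0 < α₁) (hα₂ : 0 < α₂) (hω : ω ≠ 0) :
    let K : Matrix (Fin 3) (Fin 3) ℝ := Matrix.diagonal ![1, 1, -1]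
    let R : ℝ → Matrix (Fin 3) (Fin 3) ℝ := fun θ =>
      !![Real.cos θ, -Real.sin θ, 0; Real.sin θ, Real.cos θ, 0; 0, 0, 1]
    let q₁ : ℝ → Fin 3 → ℝ := fun t => (R (ω * t)).mulVec ![0, -Real.sinh α₁, Real.cosh α₁]
    let q₂ : ℝ → Fin 3 → ℝ := fun t => (R (ω * t)).mulVec ![0, Real.sinh α₂, Real.cosh α₂]
    let J : ℝ → Fin 3 → ℝ := fun t =>
      μ₁ • ((K.mulVec (q₁ t)) ⨯₃ (K.mulVec (deriv q₁ t))) +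
      μ₂ • ((K.mulVec (q₂ t)) ⨯₃ (K.mulVec (deriv q₂ t)))
    (∀ t : ℝ, J t = (-ω / 2) •
      ![-(μ₁ * Real.sinh (2 * α₁) - μ₂ * Real.sinh (2 * α₂)) * Real.sin (ω * t),
        (μ₁ * Real.sinh (2 * α₁) - μ₂ * Real.sinh (2 * α₂)) * Real.cos (ω * t),
        -2 * (μ₁ * Real.sinh α₁ ^ 2 + μ₂ * Real.sinh α₂ ^ 2)]) ∧
    ((∀ t s : ℝ, J t = J s) ↔
      μ₁ * Real.sinh (2 * α₁) = μ₂ * Real.sinh (2 * α₂)) :=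
  momentum_rotating_hyperboloid_general μ₁ μ₂ α₁ α₂ ω hω
end

section
/- Let α₁, α₂ ∈ (0, ∞), ω ≠ 0, μ₁, μ₂ > 0, K = diag(1,1,-1). Define the hyperbolic rotation B(s) = [[cosh s, 0, sinh s],[0,1,0],[sinh s, 0, cosh s]] and set q₁(t) = B(ωt)·(0, -sinh α₁, cosh α₁)ᵀ, q₂(t) = B(ωt)·(0, sinh α₂, cosh α₂)ᵀ. Then J(t) = μ₁ (K q₁(t)) × (K q̇₁(t)) + μ₂ (K q₂(t)) × (K q̇₂(t)) is constant in t if and only if μ₁ sinh 2α₁ = μ₂ sinh 2α₂. -/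
open Real Matrix

/-!
Along an orbit `q(t) = B(ωt) (x, y, z)` of the hyperbolic rotations one has
`q̇(t) = ω B(ωt) (z, 0, x)`, and since `B` preserves `x² - z²`,
`(K q) × (K q̇) = ω ((0, x² - z², 0) - y B(ωt) (x, 0, z))`. Both bodies start with `x = 0`, so the
total momentum is `J(t) = ω (C - B(ωt) (0, 0, P))` with `C` constant and
`2P = μ₂ sinh 2α₂ - μ₁ sinh 2α₁`. As `B(ωt)` moves every vector outside the `y`-axis, `J` is
constant exactly when `P = 0`.
-/

noncomputable def hypRot (s : ℝ) : Matrix (Fin 3) (Fin 3) ℝ :=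
  !![cosh s, 0, sinh s; 0, 1, 0; sinh s, 0, cosh s]

lemma hypRot_mulVec (s x y z : ℝ) :
    hypRot s *ᵥ ![x, y, z] = ![cosh s * x + sinh s * z, y, sinh s * x + cosh s * z] := by
  ext i
  fin_cases i <;> simp [hypRot, mulVec, dotProduct, Fin.sum_univ_three]

lemma hasDerivAt_hypRot_mulVec (ω x y z t : ℝ) :
    HasDerivAt (fun t => hypRot (ω * t) *ᵥ ![x, y, z]) (ω • hypRot (ω * t) *ᵥ ![z, 0, x]) t := by
  have hωt : HasDerivAt (fun t : ℝ => ω * t) ω t := by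
    simpa using (hasDerivAt_id t).const_mul ω
  simp only [hypRot_mulVec, smul_cons, smul_eq_mul, smul_empty, hasDerivAt_pi, Fin.forall_fin_succ,
    cons_val_zero, cons_val_succ, IsEmpty.forall_iff, and_true, mul_zero]
  refine ⟨?_, hasDerivAt_const t y, ?_⟩
  · convert (hωt.cosh.mul_const x).fun_add (hωt.sinh.mul_const z) using 1
    ring
  · convert (hωt.sinh.mul_const x).fun_add (hωt.cosh.mul_const z) using 1
    ring

lemma deriv_hypRot_mulVec (ω x y z t : ℝ) :
    deriv (fun t => hypRot (ω * t) *ᵥ ![x, y, z]) t = ω • hypRot (ω * t) *ᵥ ![z, 0, x] :=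
  (hasDerivAt_hypRot_mulVec ω x y z t).deriv

lemma minkowski_mulVec (a b c : ℝ) : diagonal ![1, 1, -1] *ᵥ ![a, b, c] = ![a, b, -c] := by
  ext i
  fin_cases i <;> simp [mulVec_diagonal]

lemma cross_minkowski_hypRot_mulVec (s x y z : ℝ) :
    (diagonal ![1, 1, -1] *ᵥ (hypRot s *ᵥ ![x, y, z])) ⨯₃
        (diagonal ![1, 1, -1] *ᵥ (hypRot s *ᵥ ![z, 0, x])) =
      ![0, x ^ 2 - z ^ 2, 0] - y • hypRot s *ᵥ ![x, 0, z] := by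
  simp only [hypRot_mulVec, minkowski_mulVec, cross_apply, smul_vec3, cons_sub_cons,
    empty_sub_empty, cons_val_zero, cons_val_one, cons_val_two, head_cons, tail_cons, smul_eq_mul]
  refine vec3_eq ?_ ?_ ?_
  · ring
  · linear_combination (x ^ 2 - z ^ 2) * cosh_sq s
  · ring

lemma momentum_hypRot_orbit (ω x y z t : ℝ) :
    (diagonal ![1, 1, -1] *ᵥ (hypRot (ω * t) *ᵥ ![x, y, z])) ⨯₃
        (diagonal ![1, 1, -1] *ᵥ deriv (fun t => hypRot (ω * t) *ᵥ ![x, y, z]) t) =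
      ω • (![0, x ^ 2 - z ^ 2, 0] - y • hypRot (ω * t) *ᵥ ![x, 0, z]) := by
  rw [deriv_hypRot_mulVec, mulVec_smul, map_smul, cross_minkowski_hypRot_mulVec]

lemma hypRot_mulVec_const_iff {ω : ℝ} (hω : ω ≠ 0) (a b c : ℝ) :
    (∀ t s, hypRot (ω * t) *ᵥ ![a, b, c] = hypRot (ω * s) *ᵥ ![a, b, c]) ↔ a = 0 ∧ c = 0 := by
  refine ⟨fun h => ?_, ?_⟩
  · have hpm := congrFun (h (1 / ω) (-1 / ω)) 0
    have h0 := congrFun (h (1 / ω) 0) 0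
    simp only [hypRot_mulVec, mul_div_cancel₀ _ hω, mul_zero, cosh_zero, sinh_zero, cons_val_zero,
      cosh_neg, sinh_neg] at hpm h0
    have hc : c = 0 := by
      have : sinh 1 * c = 0 := by linarith
      exact (mul_eq_zero.mp this).resolve_left (sinh_ne_zero.mpr one_ne_zero)
    have ha : (cosh 1 - 1) * a = 0 := by rw [hc] at h0; linarith
    exact ⟨(mul_eq_zero.mp ha).resolve_left (sub_ne_zero.mpr (one_lt_cosh.mpr one_ne_zero).ne'), hc⟩
  · rintro ⟨rfl, rfl⟩ t s
    simp [hypRot_mulVec]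

theorem momentum_hyperbolic_rotation_general (μ₁ μ₂ α₁ α₂ ω : ℝ) (hω : ω ≠ 0) :
    let K : Matrix (Fin 3) (Fin 3) ℝ := Matrix.diagonal ![1, 1, -1]
    let B : ℝ → Matrix (Fin 3) (Fin 3) ℝ := fun s =>
      !![Real.cosh s, 0, Real.sinh s; 0, 1, 0; Real.sinh s, 0, Real.cosh s]
    let q₁ : ℝ → Fin 3 → ℝ := fun t => (B (ω * t)).mulVec ![0, -Real.sinh α₁, Real.cosh α₁]
    let q₂ : ℝ → Fin 3 → ℝ := fun t => (B (ω * t)).mulVec ![0, Real.sinh α₂, Real.cosh α₂]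
    let J : ℝ → Fin 3 → ℝ := fun t =>
      μ₁ • ((K.mulVec (q₁ t)) ⨯₃ (K.mulVec (deriv q₁ t))) +
      μ₂ • ((K.mulVec (q₂ t)) ⨯₃ (K.mulVec (deriv q₂ t)))
    (∀ t s : ℝ, J t = J s) ↔
      μ₁ * Real.sinh (2 * α₁) = μ₂ * Real.sinh (2 * α₂) := by
  intro K B q₁ q₂ J
  have hJ : ∀ t, J t = ω • (![0, -(μ₁ * cosh α₁ ^ 2 + μ₂ * cosh α₂ ^ 2), 0] -
      hypRot (ω * t) *ᵥ ![0, 0, μ₂ * sinh α₂ * cosh α₂ - μ₁ * sinh α₁ * cosh α₁]) := by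
    have hK : K = diagonal ![1, 1, -1] := rfl
    have hq₁ : q₁ = fun t => hypRot (ω * t) *ᵥ ![0, -sinh α₁, cosh α₁] := rfl
    have hq₂ : q₂ = fun t => hypRot (ω * t) *ᵥ ![0, sinh α₂, cosh α₂] := rfl
    intro t
    simp only [J, hK, hq₁, hq₂, momentum_hypRot_orbit]
    simp only [hypRot_mulVec, smul_vec3, cons_sub_cons, cons_add_cons, empty_sub_empty,
      empty_add_empty, smul_eq_mul]
    refine vec3_eq ?_ ?_ ?_ <;> ring
  simp only [hJ, (smul_right_injective _ hω).eq_iff, sub_right_inj, hypRot_mulVec_const_iff hω,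
    true_and, sinh_two_mul]
  exact ⟨fun h => by linear_combination -2 * h, fun h => by linear_combination -h / 2⟩

/-- Conservation criterion for the momentum along hyperbolic relative
equilibria of the two-body problem on the hyperboloid. -/
theorem momentum_hyperbolic_rotation (μ₁ μ₂ α₁ α₂ ω : ℝ)
    (hμ₁ : 0 < μ₁) (hμ₂ : 0 < μ₂)
    (hα₁ : 0 < α₁) (hα₂ : 0 < α₂) (hω : ω ≠ 0) :
    let K : Matrix (Fin 3) (Fin 3) ℝ := Matrix.diagonal ![1, 1, -1]
    let B : ℝ → Matrix (Fin 3) (Fin 3) ℝ := fun s =>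
      !![Real.cosh s, 0, Real.sinh s; 0, 1, 0; Real.sinh s, 0, Real.cosh s]
    let q₁ : ℝ → Fin 3 → ℝ := fun t => (B (ω * t)).mulVec ![0, -Real.sinh α₁, Real.cosh α₁]
    let q₂ : ℝ → Fin 3 → ℝ := fun t => (B (ω * t)).mulVec ![0, Real.sinh α₂, Real.cosh α₂]
    let J : ℝ → Fin 3 → ℝ := fun t =>
      μ₁ • ((K.mulVec (q₁ t)) ⨯₃ (K.mulVec (deriv q₁ t))) +
      μ₂ • ((K.mulVec (q₂ t)) ⨯₃ (K.mulVec (deriv q₂ t)))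
    (∀ t s : ℝ, J t = J s) ↔
      μ₁ * Real.sinh (2 * α₁) = μ₂ * Real.sinh (2 * α₂) :=
  momentum_hyperbolic_rotation_general μ₁ μ₂ α₁ α₂ ω hω
end

section
/- Let μ₁, μ₂ > 0 and define f(κ, r₂) implicitly for fixed r₁ = 1 as follows: rule C1 gives μ₁ sin(√κ) = μ₂ sin(√κ r₂) for κ > 0; rule C2 gives μ₁ = μ₂ r₂; rule C3 gives μ₁ sin(2√κ) = μ₂ sin(2√κ r₂) for κ > 0. If μ₁ ≠ μ₂ and r₂ > 0 satisfies any two of these three relations simultaneously for some κ > 0 with √κ(1 + r₂) < π/2, then a contradiction follows; the three rules coincide only in the limit κ = 0. -/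
/-!
Since `sin` is strictly concave on `[0, π]`, `sinc x = sin x / x` is strictly decreasing on
`(0, π]`. Rule C2 (`μ₁ = μ₂ r₂`) turns C1 or C3 into `sin (t r₂) = r₂ sin t` with `t = √κ` or
`t = 2√κ`, i.e. `sinc (t r₂) = sinc t`, so `r₂ = 1`. Rules C1 and C3 together give, by the double
angle formula, `cos √κ = cos (√κ r₂)`, so again `r₂ = 1`. In every case `μ₁ = μ₂` follows.
-/

open Real

namespace Real

lemma strictAntiOn_sinc : StrictAntiOn sinc (Set.Ioc 0 π) := by
  intro x hx y hy hxy
  have hsec := strictConcaveOn_sin_Icc.secant_strict_mono (a := 0) ⟨le_rfl, pi_pos.le⟩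
    (Set.Ioc_subset_Icc_self hx) (Set.Ioc_subset_Icc_self hy) hx.1.ne' hy.1.ne' hxy
  simpa [sinc_of_ne_zero hx.1.ne', sinc_of_ne_zero hy.1.ne'] using hsec

lemma eq_one_of_sin_mul_eq_mul_sin {t r : ℝ} (ht : 0 < t) (htπ : t ≤ π) (hr : 0 < r)
    (hrπ : t * r ≤ π) (h : sin (t * r) = r * sin t) : r = 1 := by
  have htr : 0 < t * r := mul_pos ht hr
  have hsinc : sinc (t * r) = sinc t := by
    rw [sinc_of_ne_zero htr.ne', sinc_of_ne_zero ht.ne', h]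
    field_simp
  have := strictAntiOn_sinc.injOn ⟨htr, hrπ⟩ ⟨ht, htπ⟩ hsinc
  nlinarith

lemma cos_eq_cos_of_mul_sin_eq {a b x y : ℝ} (hy : b * sin y ≠ 0)
    (h₁ : a * sin x = b * sin y) (h₂ : a * sin (2 * x) = b * sin (2 * y)) : cos x = cos y := by
  rw [sin_two_mul, sin_two_mul] at h₂
  have : b * sin y * cos x = b * sin y * cos y := by linear_combination h₂ / 2 - cos x * h₁
  exact mul_left_cancel₀ hy this

end Real

theorem three_rules_pairwise_incompatible_general (μ₁ μ₂ r₂ κ : ℝ)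
    (hμ₂ : 0 < μ₂) (hμ : μ₁ ≠ μ₂)
    (hr₂ : 0 < r₂) (hκ : 0 < κ)
    (hacute : Real.sqrt κ * (1 + r₂) < π / 2) :
    (μ₁ * Real.sin (Real.sqrt κ) = μ₂ * Real.sin (Real.sqrt κ * r₂) →
      μ₁ = μ₂ * r₂ → False) ∧
    (μ₁ * Real.sin (Real.sqrt κ) = μ₂ * Real.sin (Real.sqrt κ * r₂) →
      μ₁ * Real.sin (2 * Real.sqrt κ) = μ₂ * Real.sin (2 * Real.sqrt κ * r₂) → False) ∧
    (μ₁ = μ₂ * r₂ →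
      μ₁ * Real.sin (2 * Real.sqrt κ) = μ₂ * Real.sin (2 * Real.sqrt κ * r₂) → False) := by
  set s := √κ
  have hs : 0 < s := sqrt_pos.mpr hκ
  have hsr : 0 < s * r₂ := mul_pos hs hr₂
  have hacute' : s + s * r₂ < π / 2 := by linarith [mul_add s 1 r₂]
  refine ⟨fun hC1 hC2 => hμ ?_, fun hC1 hC3 => hμ ?_, fun hC2 hC3 => hμ ?_⟩
  · have hr : r₂ = 1 := eq_one_of_sin_mul_eq_mul_sin hs (by linarith) hr₂ (by linarith) <|
      mul_left_cancel₀ hμ₂.ne' (by rw [← hC1, hC2]; ring)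
    rw [hC2, hr, mul_one]
  · have hsin : 0 < sin (s * r₂) := sin_pos_of_pos_of_lt_pi hsr (by linarith)
    have hcos := cos_eq_cos_of_mul_sin_eq (mul_pos hμ₂ hsin).ne' hC1 (by rwa [mul_assoc] at hC3)
    have hsr_eq : s = s * r₂ := injOn_cos ⟨hs.le, by linarith⟩ ⟨hsr.le, by linarith⟩ hcos
    rw [← hsr_eq] at hC1
    exact mul_right_cancel₀ (sin_pos_of_pos_of_lt_pi hs (by linarith)).ne' hC1
  · have hr : r₂ = 1 := eq_one_of_sin_mul_eq_mul_sin (t := 2 * s) (by linarith) (by linarith)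
      hr₂ (by linarith) <| mul_left_cancel₀ hμ₂.ne' (by rw [← hC3, hC2]; ring)
    rw [hC2, hr, mul_one]

/-- For distinct masses, with `r₁ = 1` and an acute arc on a sphere of
curvature `κ > 0`, no two of the three centre-of-mass rules C1, C2, C3 can
hold simultaneously. -/
theorem three_rules_pairwise_incompatible (μ₁ μ₂ r₂ κ : ℝ)
    (hμ₁ : 0 < μ₁) (hμ₂ : 0 < μ₂) (hμ : μ₁ ≠ μ₂)
    (hr₂ : 0 < r₂) (hκ : 0 < κ)
    (hacute : Real.sqrt κ * (1 + r₂) < π / 2) :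
    (μ₁ * Real.sin (Real.sqrt κ) = μ₂ * Real.sin (Real.sqrt κ * r₂) →
      μ₁ = μ₂ * r₂ → False) ∧
    (μ₁ * Real.sin (Real.sqrt κ) = μ₂ * Real.sin (Real.sqrt κ * r₂) →
      μ₁ * Real.sin (2 * Real.sqrt κ) = μ₂ * Real.sin (2 * Real.sqrt κ * r₂) → False) ∧
    (μ₁ = μ₂ * r₂ →
      μ₁ * Real.sin (2 * Real.sqrt κ) = μ₂ * Real.sin (2 * Real.sqrt κ * r₂) → False) :=
  three_rules_pairwise_incompatible_general μ₁ μ₂ r₂ κ hμ₂ hμ hr₂ hκ hacute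
end
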